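/- In any orthomodular lattice, the join can be expressed by the Sasaki implication alone: a ∪ b = (a →₁ b) →₁ (((a →₁ b) →₁ (b →₁ a)) →₁ a), where a →₁ b := a' ∪ (a∩b). -/

import Mathlib

/-- An ortholattice as an algebra ⟨α, ', ∪, ∩⟩ with join `j` and
orthocomplement `c` primitive, and meet defined by De Morgan. -/
structure OrthoLattice (α : Type*) where
  j : α → α → α
  c : α → α
  j_comm : ∀ a b, j a b = j b a
  j_assoc : ∀ a b d, j (j a b) d = j a (j b d)
  c_invol : ∀ a, c (c a) = a
  j_top : ∀ a b, j a (j b (c b)) = j b (c b)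
  absorb : ∀ a b, j a (c (j (c a) (c b))) = a

namespace OrthoLattice

variable {α : Type*}

/-- meet: a ∩ b = (a' ∪ b')' -/
def m (L : OrthoLattice α) (a b : α) : α := L.c (L.j (L.c a) (L.c b))

/-- the unit 1 = a ∪ a' -/
def one (L : OrthoLattice α) (a : α) : α := L.j a (L.c a)

/-- quantum equivalence a ≡ b = (a∩b) ∪ (a'∩b') -/
def equiv (L : OrthoLattice α) (a b : α) : α := L.j (L.m a b) (L.m (L.c a) (L.c b))

/-- classical equivalence a ≡₀ b = (a'∪b) ∩ (a∪b') -/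
def equiv0 (L : OrthoLattice α) (a b : α) : α := L.m (L.j (L.c a) b) (L.j a (L.c b))

/-- Sasaki hook a →₁ b = a' ∪ (a ∩ b) -/
def sasaki (L : OrthoLattice α) (a b : α) : α := L.j (L.c a) (L.m a b)

end OrthoLattice

/-!
Write `a →₁ b = aᶜ ⊔ a ⊓ b` and put `s = a →₁ b`, `t = b →₁ a`. Both `s` and `t` lie above
`a ⊓ b`, and orthomodularity gives `(a ⊓ b)ᶜ ⊓ s = aᶜ` and `(a ⊓ b)ᶜ ⊓ t = bᶜ`, hence
`s ⊓ t = a ⊓ b ⊔ aᶜ ⊓ bᶜ`. Since `sᶜ = a ⊓ (a ⊓ b)ᶜ`, orthomodularity again collapses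
`s →₁ t` to `a ⊔ aᶜ ⊓ bᶜ`, whose Sasaki hook into `a` is `a ⊔ aᶜ ⊓ (a ⊔ b) = a ⊔ b`.
Finally `sᶜ ≤ a ⊔ b`, and `x →₁ y = y` whenever `xᶜ ≤ y`.
-/

/-- Orthomodular lattices, not necessarily bounded: `a ⊓ aᶜ` is then merely a least element. -/
class OrthomodularLattice (α : Type*) extends Lattice α, Compl α where
  compl_compl (a : α) : aᶜᶜ = a
  compl_sup (a b : α) : (a ⊔ b)ᶜ = aᶜ ⊓ bᶜ
  inf_compl_le (a b : α) : a ⊓ aᶜ ≤ b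
  sup_compl_inf_of_le {a b : α} : a ≤ b → a ⊔ aᶜ ⊓ b = b

namespace OrthomodularLattice

variable {α : Type*} [OrthomodularLattice α]

def sasaki (a b : α) : α := aᶜ ⊔ a ⊓ b

theorem compl_inf (a b : α) : (a ⊓ b)ᶜ = aᶜ ⊔ bᶜ := by
  rw [← compl_compl (aᶜ ⊔ bᶜ), compl_sup, compl_compl, compl_compl]

theorem compl_injective : Function.Injective (compl : α → α) := fun a b h => by
  rw [← compl_compl a, h, compl_compl]

theorem compl_le_compl {a b : α} (h : a ≤ b) : bᶜ ≤ aᶜ := by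
  rw [← sup_eq_right.mpr h, compl_sup]
  exact inf_le_left

theorem inf_compl_sup_of_le {a b : α} (h : b ≤ a) : a ⊓ (aᶜ ⊔ b) = b := by
  have h' := sup_compl_inf_of_le (compl_le_compl h)
  rw [compl_compl] at h'
  apply compl_injective
  rw [compl_inf, compl_sup, compl_compl, h']

theorem sasaki_of_compl_le {a b : α} (h : aᶜ ≤ b) : sasaki a b = b := by
  have h' := sup_compl_inf_of_le h
  rwa [compl_compl] at h'

theorem compl_sasaki (a b : α) : (sasaki a b)ᶜ = a ⊓ (a ⊓ b)ᶜ := by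
  rw [sasaki, compl_sup, compl_compl]

theorem sasaki_inf_sasaki (a b : α) : sasaki a b ⊓ sasaki b a = a ⊓ b ⊔ aᶜ ⊓ bᶜ := by
  have hab : a ⊓ b ≤ sasaki a b ⊓ sasaki b a :=
    le_inf le_sup_right (inf_comm a b ▸ le_sup_right)
  have cut {x : α} (hx : a ⊓ b ≤ x) : (a ⊓ b)ᶜ ⊓ (xᶜ ⊔ a ⊓ b) = xᶜ := by
    have h := inf_compl_sup_of_le (compl_le_compl hx)
    rwa [compl_compl, sup_comm] at h
  calc sasaki a b ⊓ sasaki b a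
      = a ⊓ b ⊔ (a ⊓ b)ᶜ ⊓ (sasaki a b ⊓ sasaki b a) := (sup_compl_inf_of_le hab).symm
    _ = a ⊓ b ⊔ ((a ⊓ b)ᶜ ⊓ sasaki a b) ⊓ ((a ⊓ b)ᶜ ⊓ sasaki b a) := by
      rw [inf_inf_distrib_left]
    _ = a ⊓ b ⊔ aᶜ ⊓ bᶜ := by
      rw [sasaki, sasaki, inf_comm b a, cut inf_le_left, cut inf_le_right]

theorem sasaki_sasaki_sasaki (a b : α) :
    sasaki (sasaki a b) (sasaki b a) = a ⊔ aᶜ ⊓ bᶜ := by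
  have h : (a ⊓ b)ᶜ ⊓ a ⊔ a ⊓ b = a := by
    rw [sup_comm]
    exact sup_compl_inf_of_le inf_le_left
  rw [sasaki, sasaki_inf_sasaki, compl_sasaki, ← sup_assoc, inf_comm a, h]

theorem sasaki_sup_compl_inf_compl (a b : α) : sasaki (a ⊔ aᶜ ⊓ bᶜ) a = a ⊔ b := by
  rw [sasaki, inf_comm _ a, inf_sup_self, compl_sup, compl_inf, compl_compl, compl_compl,
    sup_comm]
  exact sup_compl_inf_of_le le_sup_left

theorem sup_eq_sasaki (a b : α) :
    a ⊔ b = sasaki (sasaki a b) (sasaki (sasaki (sasaki a b) (sasaki b a)) a) := by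
  have hle : (sasaki a b)ᶜ ≤ a ⊔ b := by
    rw [compl_sasaki]
    exact inf_le_left.trans le_sup_left
  rw [sasaki_sasaki_sasaki, sasaki_sup_compl_inf_compl, sasaki_of_compl_le hle]

end OrthomodularLattice

namespace OrthoLattice

variable {α : Type*} (L : OrthoLattice α)

theorem m_comm (a b : α) : L.m a b = L.m b a := by
  rw [m, m, L.j_comm]

theorem m_assoc (a b d : α) : L.m (L.m a b) d = L.m a (L.m b d) := by
  rw [m, m, m, m, L.c_invol, L.c_invol, L.j_assoc]

theorem m_j_self (a b : α) : L.m a (L.j a b) = a := by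
  have h := L.absorb (L.c a) (L.c b)
  rw [L.c_invol, L.c_invol] at h
  rw [m, h, L.c_invol]

abbrev toOrthomodularLattice
    (hOM : ∀ a b : α, L.j a (L.m (L.c a) (L.j a b)) = L.j a b) : OrthomodularLattice α where
  toLattice := @Lattice.mk' α ⟨L.j⟩ ⟨L.m⟩ L.j_comm L.j_assoc L.m_comm L.m_assoc L.absorb
    L.m_j_self
  compl := L.c
  compl_compl := L.c_invol
  compl_sup a b := by
    change L.c (L.j a b) = L.c (L.j (L.c (L.c a)) (L.c (L.c b)))
    rw [L.c_invol, L.c_invol]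
  inf_compl_le a b := by
    have h := congrArg L.c (L.j_top (L.c b) (L.c a))
    have hle : L.m b (L.m a (L.c a)) = L.m a (L.c a) := by
      rwa [m, m, L.c_invol]
    change L.j (L.m a (L.c a)) b = b
    rw [← hle, L.j_comm]
    exact L.absorb b _
  sup_compl_inf_of_le {a b} h := by
    change L.j a b = b at h
    change L.j a (L.m (L.c a) b) = b
    rw [← h, hOM]

end OrthoLattice

/-- in any orthomodular lattice,
a ∪ b = (a →₁ b) →₁ (((a →₁ b) →₁ (b →₁ a)) →₁ a). -/
theorem stmt9 {α : Type*} (L : OrthoLattice α)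
    (hOM : ∀ a b : α, L.j a (L.m (L.c a) (L.j a b)) = L.j a b) :
    ∀ a b : α, L.j a b =
      L.sasaki (L.sasaki a b)
        (L.sasaki (L.sasaki (L.sasaki a b) (L.sasaki b a)) a) := by
  let := L.toOrthomodularLattice hOM
  exact OrthomodularLattice.sup_eq_sasaki
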